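/- Let c solve the area preserving curve shortening flow with Neumann free boundary on a convex support curve Σ, with initial curvature κ₀ ≥ 0 on [a,b]. Then κ ≥ 0 on [a,b] × [0,T), i.e. convexity of the curves is preserved under the flow. -/

import Mathlib

open Complex MeasureTheory Set Filter

/-- Spatial derivative `∂ₚ` of a one-parameter family of plane curves (the plane is `ℂ ≅ ℝ²`). -/
noncomputable def pderiv (c : ℝ → ℝ → ℂ) (p t : ℝ) : ℂ := deriv (fun q => c q t) p

/-- The real (Euclidean) inner product on the plane `ℂ ≅ ℝ²`. -/
noncomputable def rinner (x y : ℂ) : ℝ := x.re * y.re + x.im * y.im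

/-- Arclength derivative `∂ₛ = |∂ₚc|⁻¹ ∂ₚ` of a scalar quantity along a family of curves. -/
noncomputable def sderivS (c : ℝ → ℝ → ℂ) (f : ℝ → ℝ → ℝ) (p t : ℝ) : ℝ :=
  ‖pderiv c p t‖⁻¹ * deriv (fun q => f q t) p

/-- Arclength derivative of a vector quantity along a family of curves. -/
noncomputable def sderivV (c : ℝ → ℝ → ℂ) (f : ℝ → ℝ → ℂ) (p t : ℝ) : ℂ :=
  (‖pderiv c p t‖⁻¹ : ℝ) • deriv (fun q => f q t) p

/-- A solution `c : [pa,pb] × [0,T) → ℝ²` of the area preserving curve shortening flow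
`∂ₜ c = (κ - κ̄) ν`, with unit tangent `tang = ∂ₛ c`, unit normal `nor = J tang`
(rotation by `+π/2`, i.e. multiplication by `I`), curvature `curv` (via the Frenet equation),
length `len` and average curvature `curvAvg = (∫ κ ds)/len`. -/
structure APCSF where
  pa : ℝ
  pb : ℝ
  T : ℝ
  c : ℝ → ℝ → ℂ
  curv : ℝ → ℝ → ℝ
  tang : ℝ → ℝ → ℂ
  nor : ℝ → ℝ → ℂ
  curvAvg : ℝ → ℝ
  len : ℝ → ℝ
  hab : pa < pb
  hT : 0 < T
  hsmooth : ContDiff ℝ (⊤ : ℕ∞) (Function.uncurry c)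
  hreg : ∀ p t, pderiv c p t ≠ 0
  htang : ∀ p t, tang p t = (‖pderiv c p t‖⁻¹ : ℝ) • pderiv c p t
  hnor : ∀ p t, nor p t = Complex.I * tang p t
  hfrenet : ∀ p t, deriv (fun q => tang q t) p = (curv p t * ‖pderiv c p t‖) • nor p t
  hlen : ∀ t, len t = ∫ p in pa..pb, ‖pderiv c p t‖
  hcurvAvg : ∀ t, curvAvg t * len t = ∫ p in pa..pb, curv p t * ‖pderiv c p t‖
  hflow : ∀ p t, t ∈ Set.Ico 0 T →
    HasDerivAt (fun s => c p s) ((curv p t - curvAvg t) • nor p t) t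

/-- A global-in-time (`T = ∞`) solution of the area preserving curve shortening flow. -/
structure APCSFinf where
  pa : ℝ
  pb : ℝ
  c : ℝ → ℝ → ℂ
  curv : ℝ → ℝ → ℝ
  tang : ℝ → ℝ → ℂ
  nor : ℝ → ℝ → ℂ
  curvAvg : ℝ → ℝ
  len : ℝ → ℝ
  hab : pa < pb
  hsmooth : ContDiff ℝ (⊤ : ℕ∞) (Function.uncurry c)
  hreg : ∀ p t, pderiv c p t ≠ 0
  htang : ∀ p t, tang p t = (‖pderiv c p t‖⁻¹ : ℝ) • pderiv c p t
  hnor : ∀ p t, nor p t = Complex.I * tang p t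
  hfrenet : ∀ p t, deriv (fun q => tang q t) p = (curv p t * ‖pderiv c p t‖) • nor p t
  hlen : ∀ t, len t = ∫ p in pa..pb, ‖pderiv c p t‖
  hcurvAvg : ∀ t, curvAvg t * len t = ∫ p in pa..pb, curv p t * ‖pderiv c p t‖
  hflow : ∀ p t, 0 ≤ t →
    HasDerivAt (fun s => c p s) ((curv p t - curvAvg t) • nor p t) t

/-- A smooth convex closed support curve `Σ`, parametrized by arclength with period `per`,
with curvature `sk ≥ 0`. -/
structure SupportCurve where
  sf : ℝ → ℂ
  per : ℝ
  sk : ℝ → ℝ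
  hper : 0 < per
  hperiodic : Function.Periodic sf per
  hsmooth : ContDiff ℝ (⊤ : ℕ∞) sf
  harclength : ∀ u, ‖deriv sf u‖ = 1
  hsk : ∀ u, deriv (deriv sf) u = sk u • (Complex.I * deriv sf u)
  hconvex : ∀ u, 0 ≤ sk u
  hinj : Set.InjOn sf (Set.Ico 0 per)

/-- `Σd`: the minimal distance between points of `Σ` with antiparallel tangents. -/
noncomputable def SupportCurve.antipodalDist (S : SupportCurve) : ℝ :=
  sInf {r : ℝ | ∃ u v : ℝ, deriv S.sf u = -deriv S.sf v ∧ r = ‖S.sf u - S.sf v‖}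

/-- Neumann free boundary conditions (outer case): the endpoints move on `Σ` and the curve
meets `Σ` orthogonally, `τ(a,t) = -Σν⃗(c(a,t))` and `τ(b,t) = Σν⃗(c(b,t))`,
where `Σν⃗ = I · Στ⃗` is the normal of the support curve. -/
def APCSF.NeumannBC (F : APCSF) (S : SupportCurve) : Prop :=
  (∀ t ∈ Set.Ico (0:ℝ) F.T, F.c F.pa t ∈ Set.range S.sf ∧ F.c F.pb t ∈ Set.range S.sf) ∧
  (∀ t ∈ Set.Ico (0:ℝ) F.T, ∀ u, S.sf u = F.c F.pa t →
      F.tang F.pa t = -(Complex.I * deriv S.sf u)) ∧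
  (∀ t ∈ Set.Ico (0:ℝ) F.T, ∀ u, S.sf u = F.c F.pb t →
      F.tang F.pb t = Complex.I * deriv S.sf u)

section Helpers

open Complex

lemma rinner_comm (x y : ℂ) : rinner x y = rinner y x := by simp [rinner]; ring

lemma rinner_self (x : ℂ) : rinner x x = ‖x‖^2 := by
  rw [rinner, Complex.sq_norm, Complex.normSq_apply]

lemma rinner_smul_left (a : ℝ) (x y : ℂ) : rinner (a • x) y = a * rinner x y := by
  simp only [rinner, Complex.smul_re, Complex.smul_im, smul_eq_mul]; ring

lemma rinner_smul_right (a : ℝ) (x y : ℂ) : rinner x (a • y) = a * rinner x y := by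
  simp only [rinner, Complex.smul_re, Complex.smul_im, smul_eq_mul]; ring

lemma rinner_add_left (x y z : ℂ) : rinner (x + y) z = rinner x z + rinner y z := by
  simp [rinner]; ring

lemma rinner_add_right (x y z : ℂ) : rinner x (y + z) = rinner x y + rinner x z := by
  simp [rinner]; ring

lemma rinner_sub_left (x y z : ℂ) : rinner (x - y) z = rinner x z - rinner y z := by
  simp [rinner]; ring

lemma rinner_sub_right (x y z : ℂ) : rinner x (y - z) = rinner x y - rinner x z := by
  simp [rinner]; ring

lemma rinner_I_self (x : ℂ) : rinner x (Complex.I * x) = 0 := by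
  simp [rinner]; ring

lemma rinner_I_I (x y : ℂ) : rinner (Complex.I * x) (Complex.I * y) = rinner x y := by
  simp only [rinner, Complex.mul_re, Complex.mul_im, Complex.I_re, Complex.I_im]; ring

lemma rinner_neg_I_left (x y : ℂ) : rinner (-(Complex.I * x)) y = rinner x (Complex.I * y) := by
  simp [rinner]; ring

lemma rinner_I_left (x y : ℂ) : rinner (Complex.I * x) y = -rinner x (Complex.I * y) := by
  simp only [rinner, Complex.mul_re, Complex.mul_im, Complex.I_re, Complex.I_im]; ring

lemma HasDerivAt.rinner' {f g : ℝ → ℂ} {f' g' : ℂ} {t : ℝ}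
    (hf : HasDerivAt f f' t) (hg : HasDerivAt g g' t) :
    HasDerivAt (fun s => rinner (f s) (g s)) (rinner f' (g t) + rinner (f t) g') t := by
  have hfre : HasDerivAt (fun s => (f s).re) f'.re t :=
    (Complex.reCLM.hasFDerivAt.comp_hasDerivAt t hf)
  have hfim : HasDerivAt (fun s => (f s).im) f'.im t :=
    (Complex.imCLM.hasFDerivAt.comp_hasDerivAt t hf)
  have hgre : HasDerivAt (fun s => (g s).re) g'.re t :=
    (Complex.reCLM.hasFDerivAt.comp_hasDerivAt t hg)
  have hgim : HasDerivAt (fun s => (g s).im) g'.im t :=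
    (Complex.imCLM.hasFDerivAt.comp_hasDerivAt t hg)
  have := (hfre.fun_mul hgre).fun_add (hfim.fun_mul hgim)
  refine this.congr_deriv ?_; symm
  simp only [rinner]; ring

lemma HasDerivAt.cnorm {f : ℝ → ℂ} {f' : ℂ} {t : ℝ}
    (hf : HasDerivAt f f' t) (h0 : f t ≠ 0) :
    HasDerivAt (fun s => ‖f s‖) (rinner (f t) f' / ‖f t‖) t := by
  have hpos : (0:ℝ) < ‖f t‖ := norm_pos_iff.2 h0
  have hr : HasDerivAt (fun s => rinner (f s) (f s)) (rinner f' (f t) + rinner (f t) f') t :=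
    hf.rinner' hf
  have hne : rinner (f t) (f t) ≠ 0 := by
    rw [rinner_self]; positivity
  have hsq := (Real.hasDerivAt_sqrt hne).comp t hr
  have heq : (fun s => Real.sqrt (rinner (f s) (f s))) = fun s => ‖f s‖ := by
    funext s; rw [rinner_self, Real.sqrt_sq (norm_nonneg _)]
  have hsq' : HasDerivAt (fun s => ‖f s‖)
      (1 / (2 * Real.sqrt (rinner (f t) (f t))) * (rinner f' (f t) + rinner (f t) f')) t := by
    rw [← heq]; exact hsq
  convert hsq' using 1
  rw [rinner_self, Real.sqrt_sq (norm_nonneg _), rinner_comm f' (f t)]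
  field_simp
  ring

end Helpers
section SlopeHelpers

open Filter Set

/-- If `f` has negative derivative at `x`, then just to the right `f < f x`. -/
lemma ev_lt_right {f : ℝ → ℝ} {d x : ℝ} (hf : HasDerivAt f d x) (hd : d < 0) :
    ∀ᶠ y in nhdsWithin x (Set.Ioi x), f y < f x := by
  have h := hasDerivAt_iff_tendsto_slope.1 hf
  have h2 : Tendsto (slope f x) (nhdsWithin x (Set.Ioi x)) (nhds d) :=
    h.mono_left (nhdsWithin_mono x (fun y hy => ne_of_gt hy))
  have h3 : ∀ᶠ y in nhdsWithin x (Set.Ioi x), slope f x y < 0 :=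
    h2.eventually (eventually_lt_nhds hd)
  filter_upwards [h3, self_mem_nhdsWithin] with y hy hmem
  have hyx : (0:ℝ) < y - x := sub_pos.2 hmem
  rw [slope_def_field, div_neg_iff] at hy
  rcases hy with ⟨_, h⟩ | ⟨h, _⟩
  · linarith
  · linarith

lemma ev_gt_right {f : ℝ → ℝ} {d x : ℝ} (hf : HasDerivAt f d x) (hd : 0 < d) :
    ∀ᶠ y in nhdsWithin x (Set.Ioi x), f x < f y := by
  have := ev_lt_right hf.neg (by linarith : -d < 0)
  filter_upwards [this] with y hy; simpa using hy

lemma ev_gt_left {f : ℝ → ℝ} {d x : ℝ} (hf : HasDerivAt f d x) (hd : d < 0) :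
    ∀ᶠ y in nhdsWithin x (Set.Iio x), f x < f y := by
  have h := hasDerivAt_iff_tendsto_slope.1 hf
  have h2 : Tendsto (slope f x) (nhdsWithin x (Set.Iio x)) (nhds d) :=
    h.mono_left (nhdsWithin_mono x (fun y hy => ne_of_lt hy))
  have h3 : ∀ᶠ y in nhdsWithin x (Set.Iio x), slope f x y < 0 :=
    h2.eventually (eventually_lt_nhds hd)
  filter_upwards [h3, self_mem_nhdsWithin] with y hy hmem
  have hyx : y - x < 0 := sub_neg.2 hmem
  rw [slope_def_field, div_neg_iff] at hy
  rcases hy with ⟨_, h⟩ | ⟨h, _⟩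
  · linarith
  · linarith

lemma ev_lt_left {f : ℝ → ℝ} {d x : ℝ} (hf : HasDerivAt f d x) (hd : 0 < d) :
    ∀ᶠ y in nhdsWithin x (Set.Iio x), f y < f x := by
  have := ev_gt_left hf.neg (by linarith : -d < 0)
  filter_upwards [this] with y hy; simp only [Pi.neg_apply] at hy; linarith [hy]

/-- Touching from above at a positive first time: the time derivative is nonpositive. -/
lemma touch_deriv_nonpos {g : ℝ → ℝ} {D t₀ : ℝ} (ht₀ : 0 < t₀)
    (hg : HasDerivAt g D t₀) (hpos : ∀ t, 0 ≤ t → t < t₀ → 0 < g t) (h0 : g t₀ = 0) :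
    D ≤ 0 := by
  have h := hasDerivAt_iff_tendsto_slope.1 hg
  have h2 : Tendsto (slope g t₀) (nhdsWithin t₀ (Set.Iio t₀)) (nhds D) :=
    h.mono_left (nhdsWithin_mono t₀ (fun y hy => ne_of_lt hy))
  refine le_of_tendsto h2 ?_
  have hIoo : Set.Ioo (0:ℝ) t₀ ∈ nhdsWithin t₀ (Set.Iio t₀) := by
    rw [mem_nhdsWithin]
    exact ⟨Set.Ioi 0, isOpen_Ioi, ht₀, fun y hy => ⟨hy.1, hy.2⟩⟩
  filter_upwards [hIoo] with y hy
  have h1 : 0 < g y := hpos y hy.1.le hy.2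
  have h2 : y - t₀ < 0 := sub_neg.2 hy.2
  rw [slope_def_field, h0]
  apply div_nonpos_of_nonneg_of_nonpos <;> linarith

/-- At a left endpoint minimum the derivative is nonnegative. -/
lemma min_deriv_nonneg_left {f : ℝ → ℝ} {d a b : ℝ} (hab : a < b)
    (hf : HasDerivAt f d a) (hmin : ∀ x ∈ Set.Icc a b, f a ≤ f x) : 0 ≤ d := by
  have h := hasDerivAt_iff_tendsto_slope.1 hf
  have h2 : Tendsto (slope f a) (nhdsWithin a (Set.Ioi a)) (nhds d) :=
    h.mono_left (nhdsWithin_mono a (fun y hy => ne_of_gt hy))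
  refine ge_of_tendsto h2 ?_
  have hIoo : Set.Ioo a b ∈ nhdsWithin a (Set.Ioi a) := by
    rw [mem_nhdsWithin]
    exact ⟨Set.Iio b, isOpen_Iio, hab, fun y hy => ⟨hy.2, hy.1⟩⟩
  filter_upwards [hIoo] with y hy
  have h1 : f a ≤ f y := hmin y ⟨hy.1.le, hy.2.le⟩
  have h2 : 0 < y - a := sub_pos.2 hy.1
  rw [slope_def_field]
  apply div_nonneg <;> linarith

/-- At a right endpoint minimum the derivative is nonpositive. -/
lemma min_deriv_nonpos_right {f : ℝ → ℝ} {d a b : ℝ} (hab : a < b)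
    (hf : HasDerivAt f d b) (hmin : ∀ x ∈ Set.Icc a b, f b ≤ f x) : d ≤ 0 := by
  have h := hasDerivAt_iff_tendsto_slope.1 hf
  have h2 : Tendsto (slope f b) (nhdsWithin b (Set.Iio b)) (nhds d) :=
    h.mono_left (nhdsWithin_mono b (fun y hy => ne_of_lt hy))
  refine le_of_tendsto h2 ?_
  have hIoo : Set.Ioo a b ∈ nhdsWithin b (Set.Iio b) := by
    rw [mem_nhdsWithin]
    exact ⟨Set.Ioi a, isOpen_Ioi, hab, fun y hy => ⟨hy.1, hy.2⟩⟩
  filter_upwards [hIoo] with y hy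
  have h1 : f b ≤ f y := hmin y ⟨hy.1.le, hy.2.le⟩
  have h2 : y - b < 0 := sub_neg.2 hy.2
  rw [slope_def_field]
  apply div_nonpos_of_nonneg_of_nonpos <;> linarith

/-- A point of `[a,b]` where `f' = 0 > f''` cannot be a minimum of `f` on `[a,b]`. -/
lemma no_min_of_neg_second_deriv {f : ℝ → ℝ} {a b q : ℝ} (hf : ContDiff ℝ ((⊤:ℕ∞) : WithTop ℕ∞) f)
    (hab : a < b) (hq : q ∈ Set.Icc a b) (hmin : ∀ x ∈ Set.Icc a b, f q ≤ f x)
    (h1 : deriv f q = 0) (h2 : deriv (deriv f) q < 0) : False := by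
  have hd1 : Differentiable ℝ f := hf.differentiable (by simp)
  have hdf : ContDiff ℝ ((⊤:ℕ∞) : WithTop ℕ∞) (deriv f) := by
    have := ContDiff.iterate_deriv 1 hf
    simpa using this
  have hderiv2 : HasDerivAt (deriv f) (deriv (deriv f) q) q :=
    ((hdf.differentiable (by simp)) q).hasDerivAt
  rcases lt_or_eq_of_le hq.2 with hqb | hqb
  · -- q < b : f' < 0 just to the right, f strictly decreasing there
    have hev : ∀ᶠ y in nhdsWithin q (Set.Ioi q), deriv f y < deriv f q :=
      ev_lt_right hderiv2 h2
    rw [eventually_nhdsWithin_iff] at hev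
    rcases Metric.eventually_nhds_iff.1 hev with ⟨δ, hδ, hball⟩
    set x := min (q + δ/2) b with hx
    have hqx : q < x := lt_min (by linarith) hqb
    have hxb : x ≤ b := min_le_right _ _
    have hanti : StrictAntiOn f (Set.Icc q x) := by
      apply strictAntiOn_of_deriv_neg (convex_Icc q x) (hd1.continuous.continuousOn)
      intro y hy
      rw [interior_Icc] at hy
      have : dist y q < δ := by
        rw [Real.dist_eq, abs_of_pos (sub_pos.2 hy.1)]
        have : y < q + δ/2 := lt_of_lt_of_le hy.2 (min_le_left _ _)
        linarith
      have := hball this hy.1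
      rw [h1] at this; exact this
    have : f x < f q := hanti ⟨le_refl q, hqx.le⟩ ⟨hqx.le, le_refl x⟩ hqx
    have : f q ≤ f x := hmin x ⟨le_trans hq.1 hqx.le, hxb⟩
    linarith
  · -- q = b : f' > 0 just to the left, f strictly increasing there
    have hev : ∀ᶠ y in nhdsWithin q (Set.Iio q), deriv f q < deriv f y :=
      ev_gt_left hderiv2 h2
    rw [eventually_nhdsWithin_iff] at hev
    rcases Metric.eventually_nhds_iff.1 hev with ⟨δ, hδ, hball⟩
    have haq : a < q := by rw [hqb]; exact hab
    set x := max (q - δ/2) a with hx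
    have hxq : x < q := max_lt (by linarith) haq
    have hax : a ≤ x := le_max_right _ _
    have hmono : StrictMonoOn f (Set.Icc x q) := by
      apply strictMonoOn_of_deriv_pos (convex_Icc x q) (hd1.continuous.continuousOn)
      intro y hy
      rw [interior_Icc] at hy
      have : dist y q < δ := by
        rw [Real.dist_eq, abs_of_neg (sub_neg.2 hy.2)]
        have : q - δ/2 < y := lt_of_le_of_lt (le_max_left _ _) hy.1
        linarith
      have := hball this hy.2
      rw [h1] at this; exact this
    have : f x < f q := hmono ⟨le_refl x, hxq.le⟩ ⟨hxq.le, le_refl q⟩ hxq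
    have : f q ≤ f x := hmin x ⟨hax, le_trans hxq.le hq.2⟩
    linarith

end SlopeHelpers
section SmoothFamilies

variable {E : Type*} [NormedAddCommGroup E] [NormedSpace ℝ E]

lemma contDiff_slice_p {f : ℝ → ℝ → E} (hf : ContDiff ℝ ((⊤:ℕ∞) : WithTop ℕ∞) (Function.uncurry f))
    (t : ℝ) : ContDiff ℝ ((⊤:ℕ∞) : WithTop ℕ∞) (fun q => f q t) :=
  hf.comp (contDiff_id.prodMk contDiff_const)

lemma contDiff_slice_t {f : ℝ → ℝ → E} (hf : ContDiff ℝ ((⊤:ℕ∞) : WithTop ℕ∞) (Function.uncurry f))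
    (p : ℝ) : ContDiff ℝ ((⊤:ℕ∞) : WithTop ℕ∞) (fun s => f p s) :=
  hf.comp (contDiff_const.prodMk contDiff_id)

lemma hasDerivAt_slice_p {f : ℝ → ℝ → E} (hf : ContDiff ℝ ((⊤:ℕ∞) : WithTop ℕ∞) (Function.uncurry f))
    (p t : ℝ) :
    HasDerivAt (fun q => f q t) (fderiv ℝ (Function.uncurry f) (p, t) (1, 0)) p := by
  have hdU : Differentiable ℝ (Function.uncurry f) := hf.differentiable (by simp)
  exact (hdU (p,t)).hasFDerivAt.comp_hasDerivAt p ((hasDerivAt_id p).prodMk (hasDerivAt_const p t))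

lemma hasDerivAt_slice_t {f : ℝ → ℝ → E} (hf : ContDiff ℝ ((⊤:ℕ∞) : WithTop ℕ∞) (Function.uncurry f))
    (p t : ℝ) :
    HasDerivAt (fun s => f p s) (fderiv ℝ (Function.uncurry f) (p, t) (0, 1)) t := by
  have hdU : Differentiable ℝ (Function.uncurry f) := hf.differentiable (by simp)
  exact (hdU (p,t)).hasFDerivAt.comp_hasDerivAt t ((hasDerivAt_const t p).prodMk (hasDerivAt_id t))

/-- The parametric spatial derivative of a jointly smooth family is jointly smooth. -/
lemma contDiff_uncurry_pderiv' {f : ℝ → ℝ → E}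
    (hf : ContDiff ℝ ((⊤:ℕ∞) : WithTop ℕ∞) (Function.uncurry f)) :
    ContDiff ℝ ((⊤:ℕ∞) : WithTop ℕ∞) (fun z : ℝ × ℝ => deriv (fun q => f q z.2) z.1) := by
  have heq : (fun z : ℝ × ℝ => deriv (fun q => f q z.2) z.1) =
      fun z : ℝ × ℝ => fderiv ℝ (Function.uncurry f) z (1, 0) := by
    funext z
    exact (hasDerivAt_slice_p hf z.1 z.2).deriv
  rw [heq]
  have h1 : ContDiff ℝ ((⊤:ℕ∞) : WithTop ℕ∞) (fderiv ℝ (Function.uncurry f)) :=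
    hf.fderiv_right (by exact_mod_cast le_top)
  exact h1.clm_apply contDiff_const

/-- Clairaut / Schwarz: mixed partial derivatives of a jointly smooth family commute,
in `HasDerivAt` form. -/
lemma clairaut {f : ℝ → ℝ → E}
    (hf : ContDiff ℝ ((⊤:ℕ∞) : WithTop ℕ∞) (Function.uncurry f)) (p t : ℝ) :
    HasDerivAt (fun s => deriv (fun q => f q s) p)
      (deriv (fun q => deriv (fun s => f q s) t) p) t := by
  set U := Function.uncurry f with hU
  have hdU : Differentiable ℝ U := hf.differentiable (by simp)
  set A : ℝ × ℝ → (ℝ × ℝ) →L[ℝ] E := fderiv ℝ U with hA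
  have hAc : ContDiff ℝ ((⊤:ℕ∞) : WithTop ℕ∞) A := hf.fderiv_right (by exact_mod_cast le_top)
  have hU' : ∀ z, HasFDerivAt U (A z) z := fun z => (hdU z).hasFDerivAt
  have hAd : Differentiable ℝ A := hAc.differentiable (by simp)
  set B := fderiv ℝ A (p, t) with hB
  have hBt : HasFDerivAt A B (p, t) := (hAd (p, t)).hasFDerivAt
  have hsymm := second_derivative_symmetric hU' hBt
  have hpder : ∀ q s, HasDerivAt (fun q' => f q' s) (A (q, s) (1, 0)) q := fun q s =>
    (hU' (q, s)).comp_hasDerivAt (l := U) q ((hasDerivAt_id q).prodMk (hasDerivAt_const q s))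
  have htder : ∀ q s, HasDerivAt (fun s' => f q s') (A (q, s) (0, 1)) s := fun q s =>
    (hU' (q, s)).comp_hasDerivAt (l := U) s ((hasDerivAt_const s q).prodMk (hasDerivAt_id s))
  have h1 : HasDerivAt (fun s => A (p, s)) (B (0, 1)) t :=
    hBt.comp_hasDerivAt t ((hasDerivAt_const t p).prodMk (hasDerivAt_id t))
  have h2 : HasDerivAt (fun s => A (p, s) (1, 0)) (B (0, 1) (1, 0)) t := by
    have := h1.clm_apply (hasDerivAt_const t ((1:ℝ), (0:ℝ)))
    simpa using this
  have h3 : HasDerivAt (fun q => A (q, t)) (B (1, 0)) p :=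
    hBt.comp_hasDerivAt p ((hasDerivAt_id p).prodMk (hasDerivAt_const p t))
  have h4 : HasDerivAt (fun q => A (q, t) (0, 1)) (B (1, 0) (0, 1)) p := by
    have := h3.clm_apply (hasDerivAt_const p ((0:ℝ), (1:ℝ)))
    simpa using this
  have e1 : (fun s => deriv (fun q => f q s) p) = fun s => A (p, s) (1, 0) := by
    funext s; exact (hpder p s).deriv
  have e2 : deriv (fun q => deriv (fun s => f q s) t) p = B (1, 0) (0, 1) := by
    have he : (fun q => deriv (fun s => f q s) t) = fun q => A (q, t) (0, 1) := by
      funext q; exact (htder q t).deriv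
    rw [he]; exact h4.deriv
  rw [e1, e2, hsymm (1, 0) (0, 1)]
  exact h2

end SmoothFamilies
section Geometry

open Complex

lemma APCSF.smooth' (F : APCSF) : ContDiff ℝ ((⊤:ℕ∞) : WithTop ℕ∞) (Function.uncurry F.c) :=
  F.hsmooth.of_le (by simp)

lemma APCSF.norm_pderiv_pos (F : APCSF) (p t : ℝ) : 0 < ‖pderiv F.c p t‖ :=
  norm_pos_iff.2 (F.hreg p t)

lemma APCSF.norm_tang (F : APCSF) (p t : ℝ) : ‖F.tang p t‖ = 1 := by
  rw [F.htang, norm_smul, Real.norm_eq_abs, abs_inv, abs_norm]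
  exact inv_mul_cancel₀ (F.norm_pderiv_pos p t).ne'

lemma APCSF.rinner_tang_tang (F : APCSF) (p t : ℝ) : rinner (F.tang p t) (F.tang p t) = 1 := by
  rw [rinner_self, F.norm_tang]; norm_num

lemma APCSF.rinner_tang_nor (F : APCSF) (p t : ℝ) : rinner (F.tang p t) (F.nor p t) = 0 := by
  rw [F.hnor]; exact rinner_I_self _

lemma APCSF.rinner_nor_nor (F : APCSF) (p t : ℝ) : rinner (F.nor p t) (F.nor p t) = 1 := by
  rw [F.hnor, rinner_I_I]; exact F.rinner_tang_tang p t

lemma APCSF.contDiff_E (F : APCSF) :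
    ContDiff ℝ ((⊤:ℕ∞) : WithTop ℕ∞) (fun z : ℝ × ℝ => pderiv F.c z.1 z.2) :=
  contDiff_uncurry_pderiv' F.smooth'

lemma APCSF.contDiff_normE (F : APCSF) :
    ContDiff ℝ ((⊤:ℕ∞) : WithTop ℕ∞) (fun z : ℝ × ℝ => ‖pderiv F.c z.1 z.2‖) :=
  ContDiff.norm ℝ F.contDiff_E (fun z => F.hreg z.1 z.2)

lemma APCSF.contDiff_tang (F : APCSF) :
    ContDiff ℝ ((⊤:ℕ∞) : WithTop ℕ∞) (Function.uncurry F.tang) := by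
  have heq : Function.uncurry F.tang =
      fun z : ℝ × ℝ => (‖pderiv F.c z.1 z.2‖⁻¹ : ℝ) • pderiv F.c z.1 z.2 := by
    funext z; exact F.htang z.1 z.2
  rw [heq]
  exact (F.contDiff_normE.inv (fun z => (F.norm_pderiv_pos z.1 z.2).ne')).smul F.contDiff_E

lemma APCSF.contDiff_nor (F : APCSF) :
    ContDiff ℝ ((⊤:ℕ∞) : WithTop ℕ∞) (Function.uncurry F.nor) := by
  have heq : Function.uncurry F.nor = fun z : ℝ × ℝ => Complex.I * Function.uncurry F.tang z := by
    funext z; exact F.hnor z.1 z.2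
  rw [heq]
  exact contDiff_const.mul F.contDiff_tang

lemma APCSF.contDiff_pderiv_tang (F : APCSF) :
    ContDiff ℝ ((⊤:ℕ∞) : WithTop ℕ∞) (fun z : ℝ × ℝ => deriv (fun q => F.tang q z.2) z.1) :=
  contDiff_uncurry_pderiv' F.contDiff_tang

lemma APCSF.curv_mul (F : APCSF) (p t : ℝ) :
    F.curv p t * ‖pderiv F.c p t‖ = rinner (deriv (fun q => F.tang q t) p) (F.nor p t) := by
  rw [F.hfrenet, rinner_smul_left, F.rinner_nor_nor, mul_one]

lemma APCSF.curv_eq (F : APCSF) (p t : ℝ) :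
    F.curv p t = rinner (deriv (fun q => F.tang q t) p) (F.nor p t) * ‖pderiv F.c p t‖⁻¹ := by
  rw [← F.curv_mul]
  rw [mul_assoc, mul_inv_cancel₀ (F.norm_pderiv_pos p t).ne', mul_one]

lemma APCSF.contDiff_curv (F : APCSF) :
    ContDiff ℝ ((⊤:ℕ∞) : WithTop ℕ∞) (Function.uncurry F.curv) := by
  have heq : Function.uncurry F.curv = fun z : ℝ × ℝ =>
      rinner (deriv (fun q => F.tang q z.2) z.1) (F.nor z.1 z.2) * ‖pderiv F.c z.1 z.2‖⁻¹ := by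
    funext z; exact F.curv_eq z.1 z.2
  rw [heq]
  have h1 : ContDiff ℝ ((⊤:ℕ∞) : WithTop ℕ∞) (fun z : ℝ × ℝ =>
      rinner (deriv (fun q => F.tang q z.2) z.1) (F.nor z.1 z.2)) := by
    simp only [rinner]
    have hPT := F.contDiff_pderiv_tang
    have hN : ContDiff ℝ ((⊤:ℕ∞) : WithTop ℕ∞) (fun z : ℝ × ℝ => F.nor z.1 z.2) := F.contDiff_nor
    have hre : ∀ (g : ℝ × ℝ → ℂ), ContDiff ℝ ((⊤:ℕ∞) : WithTop ℕ∞) g →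
        ContDiff ℝ ((⊤:ℕ∞) : WithTop ℕ∞) (fun z => (g z).re) := fun g hg =>
      Complex.reCLM.contDiff.comp hg
    have him : ∀ (g : ℝ × ℝ → ℂ), ContDiff ℝ ((⊤:ℕ∞) : WithTop ℕ∞) g →
        ContDiff ℝ ((⊤:ℕ∞) : WithTop ℕ∞) (fun z => (g z).im) := fun g hg =>
      Complex.imCLM.contDiff.comp hg
    exact ((hre _ hPT).mul (hre _ hN)).add ((him _ hPT).mul (him _ hN))
  exact h1.mul (F.contDiff_normE.inv (fun z => (F.norm_pderiv_pos z.1 z.2).ne'))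

lemma APCSF.hasDerivAt_tang_p (F : APCSF) (p t : ℝ) :
    HasDerivAt (fun q => F.tang q t)
      ((F.curv p t * ‖pderiv F.c p t‖) • F.nor p t) p := by
  have h := (((contDiff_slice_p F.contDiff_tang t).differentiable
    (by simp)) p).hasDerivAt
  rwa [F.hfrenet p t] at h

lemma APCSF.hasDerivAt_nor_p (F : APCSF) (p t : ℝ) :
    HasDerivAt (fun q => F.nor q t)
      (-((F.curv p t * ‖pderiv F.c p t‖) • F.tang p t)) p := by
  have h := (F.hasDerivAt_tang_p p t).const_mul Complex.I
  have heq : (fun q => Complex.I * F.tang q t) = fun q => F.nor q t := by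
    funext q; rw [F.hnor]
  rw [heq] at h
  refine h.congr_deriv ?_; symm
  rw [mul_smul_comm, F.hnor]
  rw [show Complex.I * (Complex.I * F.tang p t) = -F.tang p t by
    rw [← mul_assoc, Complex.I_mul_I]; ring]
  simp

lemma APCSF.hasDerivAt_curv_p (F : APCSF) (p t : ℝ) :
    HasDerivAt (fun q => F.curv q t) (deriv (fun q => F.curv q t) p) p :=
  (((contDiff_slice_p F.contDiff_curv t).differentiable (by simp)) p).hasDerivAt

lemma APCSF.hasDerivAt_E_p (F : APCSF) (p t : ℝ) :
    HasDerivAt (fun q => pderiv F.c q t) (deriv (fun q => pderiv F.c q t) p) p := by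
  have hc : ContDiff ℝ ((⊤:ℕ∞) : WithTop ℕ∞) (fun q => pderiv F.c q t) :=
    F.contDiff_E.comp (contDiff_id.prodMk contDiff_const)
  exact ((hc.differentiable (by simp)) p).hasDerivAt

end Geometry
section Evolution

open Complex Set

lemma APCSF.e_eq (F : APCSF) (p t : ℝ) :
    pderiv F.c p t = ‖pderiv F.c p t‖ • F.tang p t := by
  rw [F.htang, smul_smul, mul_inv_cancel₀ (F.norm_pderiv_pos p t).ne', one_smul]

lemma APCSF.rinner_e_tang (F : APCSF) (p t : ℝ) :
    rinner (pderiv F.c p t) (F.tang p t) = ‖pderiv F.c p t‖ := by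
  conv_lhs => rw [F.e_eq]
  rw [rinner_smul_left, F.rinner_tang_tang, mul_one]

lemma APCSF.rinner_e_nor (F : APCSF) (p t : ℝ) :
    rinner (pderiv F.c p t) (F.nor p t) = 0 := by
  conv_lhs => rw [F.e_eq]
  rw [rinner_smul_left, F.rinner_tang_nor, mul_zero]

/-- Evolution of the spatial derivative: `∂ₜ ∂ₚ c = ∂ₚ ((κ-κ̄)ν)`. -/
lemma APCSF.hasDerivAt_E_t (F : APCSF) (p : ℝ) {t : ℝ} (ht : t ∈ Set.Ico 0 F.T) :
    HasDerivAt (fun s => pderiv F.c p s)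
      ((deriv (fun q => F.curv q t) p) • F.nor p t
        - ((F.curv p t - F.curvAvg t) * (F.curv p t * ‖pderiv F.c p t‖)) • F.tang p t) t := by
  have hcl := clairaut F.smooth' p t
  have heq1 : (fun q => deriv (fun s => F.c q s) t)
      = fun q => (F.curv q t - F.curvAvg t) • F.nor q t := by
    funext q; exact (F.hflow q t ht).deriv
  rw [heq1] at hcl
  have hG : HasDerivAt (fun q => (F.curv q t - F.curvAvg t) • F.nor q t)
      ((F.curv p t - F.curvAvg t) • (-((F.curv p t * ‖pderiv F.c p t‖) • F.tang p t))
        + (deriv (fun q => F.curv q t) p) • F.nor p t) p :=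
    ((F.hasDerivAt_curv_p p t).sub_const (F.curvAvg t)).smul (F.hasDerivAt_nor_p p t)
  rw [hG.deriv] at hcl
  have : (fun s => deriv (fun q => F.c q s) p) = fun s => pderiv F.c p s := by
    funext s; rfl
  rw [this] at hcl
  refine hcl.congr_deriv ?_; symm
  match_scalars
  · ring
  · ring

/-- Evolution of the length element: `∂ₜ |∂ₚc| = -κ(κ-κ̄)|∂ₚc|`. -/
lemma APCSF.hasDerivAt_normE_t (F : APCSF) (p : ℝ) {t : ℝ} (ht : t ∈ Set.Ico 0 F.T) :
    HasDerivAt (fun s => ‖pderiv F.c p s‖)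
      (-((F.curv p t - F.curvAvg t) * F.curv p t * ‖pderiv F.c p t‖)) t := by
  have h := (F.hasDerivAt_E_t p ht).cnorm (F.hreg p t)
  convert h using 1
  rw [rinner_sub_right, rinner_smul_right, rinner_smul_right,
    F.rinner_e_nor, F.rinner_e_tang]
  have hr : ‖pderiv F.c p t‖ ≠ 0 := by
    exact (F.norm_pderiv_pos p t).ne'
  field_simp
  try ring
  try exact Or.inl trivial

/-- Evolution of the unit tangent: `∂ₜ τ = (∂ₛκ) ν`. -/
lemma APCSF.hasDerivAt_tang_t (F : APCSF) (p : ℝ) {t : ℝ} (ht : t ∈ Set.Ico 0 F.T) :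
    HasDerivAt (fun s => F.tang p s)
      ((‖pderiv F.c p t‖⁻¹ * deriv (fun q => F.curv q t) p) • F.nor p t) t := by
  have hrt := F.hasDerivAt_normE_t p ht
  have hE := F.hasDerivAt_E_t p ht
  have hinv := hrt.fun_inv (F.norm_pderiv_pos p t).ne'
  have h := hinv.fun_smul hE
  have heq : (fun s => (‖pderiv F.c p s‖)⁻¹ • pderiv F.c p s) = fun s => F.tang p s := by
    funext s; rw [F.htang]
  rw [heq] at h
  refine h.congr_deriv ?_; symm
  set r := ‖pderiv F.c p t‖ with hr
  have hrpos : 0 < r := F.norm_pderiv_pos p t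
  have he : pderiv F.c p t = r • F.tang p t := F.e_eq p t
  rw [he]
  match_scalars <;> (field_simp; try ring)

/-- Evolution of the unit normal: `∂ₜ ν = -(∂ₛκ) τ`. -/
lemma APCSF.hasDerivAt_nor_t (F : APCSF) (p : ℝ) {t : ℝ} (ht : t ∈ Set.Ico 0 F.T) :
    HasDerivAt (fun s => F.nor p s)
      (-((‖pderiv F.c p t‖⁻¹ * deriv (fun q => F.curv q t) p) • F.tang p t)) t := by
  have h := (F.hasDerivAt_tang_t p ht).const_mul Complex.I
  have heq : (fun s => Complex.I * F.tang p s) = fun s => F.nor p s := by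
    funext s; rw [F.hnor]
  rw [heq] at h
  refine h.congr_deriv ?_; symm
  rw [mul_smul_comm, F.hnor]
  rw [show Complex.I * (Complex.I * F.tang p t) = -F.tang p t by
    rw [← mul_assoc, Complex.I_mul_I]; ring]
  simp

/-- Mixed second derivative of the tangent. -/
lemma APCSF.hasDerivAt_pderiv_tang_t (F : APCSF) (p : ℝ) {t : ℝ} (ht : t ∈ Set.Ico 0 F.T) :
    HasDerivAt (fun s => deriv (fun q => F.tang q s) p)
      ((deriv (fun q => ‖pderiv F.c q t‖⁻¹ * deriv (fun q' => F.curv q' t) q) p) • F.nor p t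
        + (‖pderiv F.c p t‖⁻¹ * deriv (fun q => F.curv q t) p)
            • (-((F.curv p t * ‖pderiv F.c p t‖) • F.tang p t))) t := by
  have hcl := clairaut F.contDiff_tang p t
  have heq1 : (fun q => deriv (fun s => F.tang q s) t)
      = fun q => (‖pderiv F.c q t‖⁻¹ * deriv (fun q' => F.curv q' t) q) • F.nor q t := by
    funext q; exact (F.hasDerivAt_tang_t q ht).deriv
  rw [heq1] at hcl
  -- differentiate the right-hand side in `p`
  have hg : HasDerivAt (fun q => ‖pderiv F.c q t‖⁻¹ * deriv (fun q' => F.curv q' t) q)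
      (deriv (fun q => ‖pderiv F.c q t‖⁻¹ * deriv (fun q' => F.curv q' t) q) p) p := by
    have h1 : ContDiff ℝ ((⊤:ℕ∞) : WithTop ℕ∞) (fun q => ‖pderiv F.c q t‖⁻¹) := by
      have := F.contDiff_normE.comp ((contDiff_id.prodMk contDiff_const :
        ContDiff ℝ ((⊤:ℕ∞) : WithTop ℕ∞) (fun q : ℝ => (q, t))))
      exact this.inv (fun q => (F.norm_pderiv_pos q t).ne')
    have h2 : ContDiff ℝ ((⊤:ℕ∞) : WithTop ℕ∞) (fun q => deriv (fun q' => F.curv q' t) q) :=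
      (contDiff_uncurry_pderiv' F.contDiff_curv).comp ((contDiff_id.prodMk contDiff_const :
        ContDiff ℝ ((⊤:ℕ∞) : WithTop ℕ∞) (fun q : ℝ => (q, t))))
    exact (((h1.mul h2).differentiable (by simp)) p).hasDerivAt
  have hG : HasDerivAt (fun q => (‖pderiv F.c q t‖⁻¹ * deriv (fun q' => F.curv q' t) q) • F.nor q t)
      ((‖pderiv F.c p t‖⁻¹ * deriv (fun q => F.curv q t) p)
          • (-((F.curv p t * ‖pderiv F.c p t‖) • F.tang p t))
        + (deriv (fun q => ‖pderiv F.c q t‖⁻¹ * deriv (fun q' => F.curv q' t) q) p) • F.nor p t)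
      p := hg.smul (F.hasDerivAt_nor_p p t)
  rw [hG.deriv] at hcl
  refine hcl.congr_deriv ?_; symm
  abel

/-- The evolution equation of the curvature: `∂ₜκ = ∂ₛ²κ + κ²(κ-κ̄)` (in parameter form). -/
lemma APCSF.pde (F : APCSF) (p : ℝ) {t : ℝ} (ht : t ∈ Set.Ico 0 F.T) :
    HasDerivAt (fun s => F.curv p s)
      (‖pderiv F.c p t‖⁻¹
          * deriv (fun q => ‖pderiv F.c q t‖⁻¹ * deriv (fun q' => F.curv q' t) q) p
        + F.curv p t ^ 2 * (F.curv p t - F.curvAvg t)) t := by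
  -- d/dt (κ·r) = W
  have hX := F.hasDerivAt_pderiv_tang_t p ht
  have hN := F.hasDerivAt_nor_t p ht
  have hprod : HasDerivAt (fun s => rinner (deriv (fun q => F.tang q s) p) (F.nor p s)) _ t :=
    hX.rinner' hN
  have heq : (fun s => rinner (deriv (fun q => F.tang q s) p) (F.nor p s))
      = fun s => F.curv p s * ‖pderiv F.c p s‖ := by
    funext s; rw [F.curv_mul]
  rw [heq] at hprod
  -- clean up the value of hprod
  set W := deriv (fun q => ‖pderiv F.c q t‖⁻¹ * deriv (fun q' => F.curv q' t) q) p with hW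
  set A := ‖pderiv F.c p t‖⁻¹ * deriv (fun q => F.curv q t) p with hA
  have hval : (rinner (W • F.nor p t + A • (-((F.curv p t * ‖pderiv F.c p t‖) • F.tang p t)))
        (F.nor p t)
      + rinner (deriv (fun q => F.tang q t) p) (-(A • F.tang p t))) = W := by
    rw [F.hfrenet p t]
    rw [rinner_add_left, rinner_smul_left, F.rinner_nor_nor]
    rw [show (-((F.curv p t * ‖pderiv F.c p t‖) • F.tang p t) : ℂ)
        = (-(F.curv p t * ‖pderiv F.c p t‖)) • F.tang p t by rw [neg_smul]]
    rw [rinner_smul_left, rinner_smul_left]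
    rw [show (-(A • F.tang p t) : ℂ) = (-A) • F.tang p t by rw [neg_smul]]
    rw [rinner_smul_right, rinner_smul_left]
    rw [rinner_comm (F.nor p t) (F.tang p t), F.rinner_tang_nor]
    ring
  rw [hval] at hprod
  -- now κ = (κ r) * r⁻¹
  have hrt := F.hasDerivAt_normE_t p ht
  have hinv := hrt.fun_inv (F.norm_pderiv_pos p t).ne'
  have h := hprod.fun_mul hinv
  have heq2 : (fun s => F.curv p s * ‖pderiv F.c p s‖ * (‖pderiv F.c p s‖)⁻¹)
      = fun s => F.curv p s := by
    funext s
    rw [mul_assoc, mul_inv_cancel₀ (F.norm_pderiv_pos p s).ne', mul_one]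
  rw [heq2] at h
  refine h.congr_deriv ?_; symm
  have hrpos : 0 < ‖pderiv F.c p t‖ := F.norm_pderiv_pos p t
  have hrne : ‖pderiv F.c p t‖ ≠ 0 := by
    exact hrpos.ne'
  field_simp

end Evolution
section Average

open Set

lemma APCSF.continuous_normE_slice (F : APCSF) (t : ℝ) :
    Continuous (fun q => ‖pderiv F.c q t‖) := by
  have := F.contDiff_normE.comp ((contDiff_id.prodMk contDiff_const :
    ContDiff ℝ ((⊤:ℕ∞) : WithTop ℕ∞) (fun q : ℝ => (q, t))))
  exact this.continuous

lemma APCSF.continuous_curv_slice (F : APCSF) (t : ℝ) :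
    Continuous (fun q => F.curv q t) := by
  have := F.contDiff_curv.comp ((contDiff_id.prodMk contDiff_const :
    ContDiff ℝ ((⊤:ℕ∞) : WithTop ℕ∞) (fun q : ℝ => (q, t))))
  exact this.continuous

lemma APCSF.len_pos (F : APCSF) (t : ℝ) : 0 < F.len t := by
  rw [F.hlen]
  apply intervalIntegral.intervalIntegral_pos_of_pos_on
  · exact (F.continuous_normE_slice t).intervalIntegrable _ _
  · exact fun x _ => F.norm_pderiv_pos x t
  · exact F.hab

lemma APCSF.avg_bound (F : APCSF) {t M : ℝ}
    (hM : ∀ p ∈ Set.Icc F.pa F.pb, |F.curv p t| ≤ M) : |F.curvAvg t| ≤ M := by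
  have hlen := F.len_pos t
  have hint1 : IntervalIntegrable (fun q => F.curv q t * ‖pderiv F.c q t‖)
      MeasureTheory.volume F.pa F.pb :=
    ((F.continuous_curv_slice t).mul (F.continuous_normE_slice t)).intervalIntegrable _ _
  have hint2 : IntervalIntegrable (fun q => M * ‖pderiv F.c q t‖)
      MeasureTheory.volume F.pa F.pb :=
    (continuous_const.mul (F.continuous_normE_slice t)).intervalIntegrable _ _
  have hint3 : IntervalIntegrable (fun q => (-M) * ‖pderiv F.c q t‖)
      MeasureTheory.volume F.pa F.pb :=
    (continuous_const.mul (F.continuous_normE_slice t)).intervalIntegrable _ _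
  have hub : F.curvAvg t * F.len t ≤ M * F.len t := by
    rw [F.hcurvAvg, F.hlen, ← intervalIntegral.integral_const_mul]
    apply intervalIntegral.integral_mono_on F.hab.le hint1 hint2
    intro x hx
    have h1 : |F.curv x t| ≤ M := hM x hx
    have h2 : 0 ≤ ‖pderiv F.c x t‖ := norm_nonneg _
    nlinarith [abs_le.1 h1]
  have hlb : (-M) * F.len t ≤ F.curvAvg t * F.len t := by
    rw [F.hcurvAvg, F.hlen, ← intervalIntegral.integral_const_mul]
    apply intervalIntegral.integral_mono_on F.hab.le hint3 hint1
    intro x hx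
    have h1 : |F.curv x t| ≤ M := hM x hx
    have h2 : 0 ≤ ‖pderiv F.c x t‖ := norm_nonneg _
    nlinarith [abs_le.1 h1]
  rw [abs_le]
  constructor
  · exact le_of_mul_le_mul_right (by linarith) hlen
  · exact le_of_mul_le_mul_right (by linarith) hlen

lemma APCSF.min_le_avg (F : APCSF) {t p₀ : ℝ} (hp₀ : p₀ ∈ Set.Icc F.pa F.pb)
    (hmin : ∀ p ∈ Set.Icc F.pa F.pb, F.curv p₀ t ≤ F.curv p t) :
    F.curv p₀ t ≤ F.curvAvg t := by
  have hlen := F.len_pos t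
  have hint1 : IntervalIntegrable (fun q => F.curv q t * ‖pderiv F.c q t‖)
      MeasureTheory.volume F.pa F.pb :=
    ((F.continuous_curv_slice t).mul (F.continuous_normE_slice t)).intervalIntegrable _ _
  have hint2 : IntervalIntegrable (fun q => F.curv p₀ t * ‖pderiv F.c q t‖)
      MeasureTheory.volume F.pa F.pb :=
    (continuous_const.mul (F.continuous_normE_slice t)).intervalIntegrable _ _
  have h : F.curv p₀ t * F.len t ≤ F.curvAvg t * F.len t := by
    rw [F.hcurvAvg, F.hlen, ← intervalIntegral.integral_const_mul]
    apply intervalIntegral.integral_mono_on F.hab.le hint2 hint1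
    intro x hx
    exact mul_le_mul_of_nonneg_right (hmin x hx) (norm_nonneg _)
  exact le_of_mul_le_mul_right h hlen

lemma APCSF.min_lt_avg (F : APCSF) {t p₀ : ℝ} (hp₀ : p₀ ∈ Set.Icc F.pa F.pb)
    (hstrict : ∀ p ∈ Set.Ioo F.pa F.pb, F.curv p₀ t < F.curv p t) :
    F.curv p₀ t < F.curvAvg t := by
  have hlen := F.len_pos t
  have hint1 : IntervalIntegrable (fun q => F.curv q t * ‖pderiv F.c q t‖)
      MeasureTheory.volume F.pa F.pb :=
    ((F.continuous_curv_slice t).mul (F.continuous_normE_slice t)).intervalIntegrable _ _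
  have hint2 : IntervalIntegrable (fun q => F.curv p₀ t * ‖pderiv F.c q t‖)
      MeasureTheory.volume F.pa F.pb :=
    (continuous_const.mul (F.continuous_normE_slice t)).intervalIntegrable _ _
  have h : F.curv p₀ t * F.len t < F.curvAvg t * F.len t := by
    rw [F.hcurvAvg, F.hlen, ← intervalIntegral.integral_const_mul]
    have hpos : 0 < ∫ q in F.pa..F.pb,
        (F.curv q t * ‖pderiv F.c q t‖ - F.curv p₀ t * ‖pderiv F.c q t‖) := by
      apply intervalIntegral.intervalIntegral_pos_of_pos_on
      · exact hint1.sub hint2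
      · intro x hx
        have h1 : F.curv p₀ t < F.curv x t := hstrict x hx
        have h2 : 0 < ‖pderiv F.c x t‖ := F.norm_pderiv_pos x t
        nlinarith
      · exact F.hab
    have := intervalIntegral.integral_sub hint1 hint2
    rw [this] at hpos
    linarith
  exact lt_of_mul_lt_mul_right h hlen.le

end Average
section SupportGeometry

open Complex Set Filter

lemma Continuous.rinner2 {α : Type*} [TopologicalSpace α] {f g : α → ℂ}
    (hf : Continuous f) (hg : Continuous g) : Continuous (fun x => rinner (f x) (g x)) := by
  simp only [rinner]
  exact ((Complex.continuous_re.comp hf).mul (Complex.continuous_re.comp hg)).add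
    ((Complex.continuous_im.comp hf).mul (Complex.continuous_im.comp hg))

lemma SupportCurve.smooth' (S : SupportCurve) : ContDiff ℝ ((⊤:ℕ∞) : WithTop ℕ∞) S.sf :=
  S.hsmooth.of_le (by simp)

lemma SupportCurve.contDiff_deriv (S : SupportCurve) :
    ContDiff ℝ ((⊤:ℕ∞) : WithTop ℕ∞) (deriv S.sf) := by
  have := ContDiff.iterate_deriv 1 S.smooth'
  simpa using this

lemma SupportCurve.hasDerivAt_sf (S : SupportCurve) (u : ℝ) :
    HasDerivAt S.sf (deriv S.sf u) u :=
  ((S.smooth'.differentiable (by simp)) u).hasDerivAt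

lemma SupportCurve.hasDerivAt_deriv_sf (S : SupportCurve) (u : ℝ) :
    HasDerivAt (deriv S.sf) (S.sk u • (Complex.I * deriv S.sf u)) u := by
  have h := ((S.contDiff_deriv.differentiable (by simp)) u).hasDerivAt
  rwa [S.hsk u] at h

lemma SupportCurve.param_mod (S : SupportCurve) {x y : ℝ} (h : S.sf x = S.sf y) :
    ∃ n : ℤ, x = y + n * S.per := by
  have hper := S.hper
  have key : ∀ z : ℝ, z - ⌊z / S.per⌋ * S.per ∈ Set.Ico 0 S.per ∧
      S.sf (z - ⌊z / S.per⌋ * S.per) = S.sf z := by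
    intro z
    constructor
    · have h1 : z - ⌊z / S.per⌋ * S.per = S.per * Int.fract (z / S.per) := by
        rw [Int.fract]; field_simp
      rw [h1]
      constructor
      · exact mul_nonneg hper.le (Int.fract_nonneg _)
      · calc S.per * Int.fract (z / S.per) < S.per * 1 :=
              (mul_lt_mul_iff_right₀ hper).2 (Int.fract_lt_one _)
          _ = S.per := mul_one _
    · exact S.hperiodic.sub_int_mul_eq _
  obtain ⟨hx1, hx2⟩ := key x
  obtain ⟨hy1, hy2⟩ := key y
  have heq : x - ⌊x / S.per⌋ * S.per = y - ⌊y / S.per⌋ * S.per :=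
    S.hinj hx1 hy1 (by rw [hx2, hy2, h])
  exact ⟨⌊x / S.per⌋ - ⌊y / S.per⌋, by push_cast; linarith⟩

/-- Near a point of `Σ`, points of `Σ` can be parametrized in a small window,
`ω` (tangent turning test function) is monotone and `σ` (tangential coordinate)
is strictly monotone on the window. -/
lemma SupportCurve.window (S : SupportCurve) (u₀ : ℝ) :
    ∃ δ : ℝ, 0 < δ ∧
      MonotoneOn (fun v => rinner (deriv S.sf v) (Complex.I * deriv S.sf u₀))
        (Set.Icc (u₀ - δ) (u₀ + δ)) ∧
      StrictMonoOn (fun v => rinner (S.sf v) (deriv S.sf u₀)) (Set.Icc (u₀ - δ) (u₀ + δ)) ∧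
      (∀ᶠ x in nhds (S.sf u₀), x ∈ Set.range S.sf →
        ∃ v ∈ Set.Icc (u₀ - δ) (u₀ + δ), S.sf v = x) := by
  -- choose δ so that tangents in the window are positively aligned with the tangent at u₀
  have hcont : Continuous (fun v => rinner (deriv S.sf v) (deriv S.sf u₀)) :=
    (S.contDiff_deriv.continuous).rinner2 continuous_const
  have hval : rinner (deriv S.sf u₀) (deriv S.sf u₀) = 1 := by
    rw [rinner_self, S.harclength]; norm_num
  have hev : ∀ᶠ v in nhds u₀, 0 < rinner (deriv S.sf v) (deriv S.sf u₀) := by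
    have : ContinuousAt (fun v => rinner (deriv S.sf v) (deriv S.sf u₀)) u₀ :=
      hcont.continuousAt
    have h2 := this.eventually_mem (s := Set.Ioi (0:ℝ)) (isOpen_Ioi.mem_nhds (by rw [hval]; norm_num))
    simpa using h2
  rcases Metric.eventually_nhds_iff.1 hev with ⟨ε, hε, hball⟩
  set δ := ε / 2 with hδdef
  have hδ : 0 < δ := by positivity
  have hwin : ∀ v ∈ Set.Icc (u₀ - δ) (u₀ + δ), 0 < rinner (deriv S.sf v) (deriv S.sf u₀) := by
    intro v hv
    apply hball
    rw [Real.dist_eq, abs_lt]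
    rcases hv with ⟨h1, h2⟩
    constructor <;> linarith
  refine ⟨δ, hδ, ?_, ?_, ?_⟩
  · -- ω monotone
    have hω : ∀ v, HasDerivAt (fun w => rinner (deriv S.sf w) (Complex.I * deriv S.sf u₀))
        (S.sk v * rinner (deriv S.sf v) (deriv S.sf u₀)) v := by
      intro v
      have h := (S.hasDerivAt_deriv_sf v).rinner' (hasDerivAt_const v (Complex.I * deriv S.sf u₀))
      convert h using 1
      rw [rinner_smul_left]
      have hI : rinner (Complex.I * deriv S.sf v) (Complex.I * deriv S.sf u₀)
          = rinner (deriv S.sf v) (deriv S.sf u₀) := rinner_I_I _ _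
      rw [hI]
      simp [rinner]
    apply monotoneOn_of_deriv_nonneg (convex_Icc _ _)
    · have hd : Differentiable ℝ (fun w => rinner (deriv S.sf w) (Complex.I * deriv S.sf u₀)) :=
        fun v => (hω v).differentiableAt
      exact hd.continuous.continuousOn
    · intro x _
      exact (hω x).differentiableAt.differentiableWithinAt
    · intro x hx
      rw [(hω x).deriv]
      rw [interior_Icc] at hx
      exact mul_nonneg (S.hconvex x) (hwin x ⟨hx.1.le, hx.2.le⟩).le
  · -- σ strictly monotone
    have hσ : ∀ v, HasDerivAt (fun w => rinner (S.sf w) (deriv S.sf u₀))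
        (rinner (deriv S.sf v) (deriv S.sf u₀)) v := by
      intro v
      have h := (S.hasDerivAt_sf v).rinner' (hasDerivAt_const v (deriv S.sf u₀))
      convert h using 1
      simp [rinner]
    apply strictMonoOn_of_deriv_pos (convex_Icc _ _)
    · intro x _
      exact (hσ x).differentiableAt.continuousAt.continuousWithinAt
    · intro x hx
      rw [(hσ x).deriv]
      rw [interior_Icc] at hx
      exact hwin x ⟨hx.1.le, hx.2.le⟩
  · -- localization of preimages
    set a := u₀ - S.per / 2 with ha
    set Kc := Set.Icc a (a + S.per) \ Set.Ioo (u₀ - δ) (u₀ + δ) with hKc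
    have hKcc : IsCompact Kc := isCompact_Icc.diff isOpen_Ioo
    have himg : IsCompact (S.sf '' Kc) := hKcc.image S.hsmooth.continuous
    have hnotin : S.sf u₀ ∉ S.sf '' Kc := by
      rintro ⟨v, hv, heq⟩
      obtain ⟨n, hn⟩ := S.param_mod heq
      have hv1 := hv.1
      have hv2 := hv.2
      have hper := S.hper
      have hn0 : n = 0 := by
        rcases hv1 with ⟨h1, h2⟩
        have hb1 : (n : ℝ) * S.per ≤ S.per / 2 := by rw [ha] at h2; linarith [hn ▸ h2]
        have hb2 : -(S.per / 2) ≤ (n : ℝ) * S.per := by rw [ha] at h1; linarith [hn ▸ h1]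
        by_contra hne
        rcases lt_or_gt_of_ne hne with hlt | hgt
        · have : (n : ℝ) ≤ -1 := by
            have : n ≤ -1 := by omega
            exact_mod_cast this
          nlinarith
        · have : (1 : ℝ) ≤ (n : ℝ) := by exact_mod_cast hgt
          nlinarith
      rw [hn0] at hn
      simp at hn
      apply hv2
      rw [hn]
      exact ⟨by linarith, by linarith⟩
    have hopen : ∀ᶠ x in nhds (S.sf u₀), x ∉ S.sf '' Kc := by
      have hcl : IsClosed (S.sf '' Kc) := himg.isClosed
      exact hcl.isOpen_compl.mem_nhds hnotin
    filter_upwards [hopen] with x hx hrange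
    obtain ⟨w, hw⟩ := hrange
    obtain ⟨y, hy, hxy⟩ := S.hperiodic.exists_mem_Ico S.hper w a
    have hyIcc : y ∈ Set.Icc a (a + S.per) := ⟨hy.1, hy.2.le⟩
    have hysf : S.sf y = x := by rw [← hxy, hw]
    have hyin : y ∈ Set.Ioo (u₀ - δ) (u₀ + δ) := by
      by_contra hnot
      exact hx ⟨y, ⟨hyIcc, hnot⟩, hysf⟩
    exact ⟨y, ⟨hyin.1.le, hyin.2.le⟩, hysf⟩

end SupportGeometry
section BoundaryLemmas

open Complex Set Filter

lemma APCSF.continuous_c_t (F : APCSF) (p : ℝ) : Continuous (fun s => F.c p s) :=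
  (contDiff_slice_t F.smooth' p).continuous

/-- Boundary condition at the left endpoint: at a time where `κ(pa,t) < κ̄(t)`,
the spatial derivative of the curvature at `pa` is nonpositive. -/
lemma APCSF.boundary_a (F : APCSF) (S : SupportCurve) (hbc : F.NeumannBC S) {t : ℝ}
    (ht0 : 0 < t) (htT : t < F.T) (hlt : F.curv F.pa t < F.curvAvg t) :
    deriv (fun q => F.curv q t) F.pa ≤ 0 := by
  by_contra hcon
  push_neg at hcon
  have htmem : t ∈ Set.Ico 0 F.T := ⟨ht0.le, htT⟩
  obtain ⟨u₀, hu₀⟩ := (hbc.1 t htmem).1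
  have htau : F.tang F.pa t = -(Complex.I * deriv S.sf u₀) := hbc.2.1 t htmem u₀ hu₀
  have hnu : F.nor F.pa t = deriv S.sf u₀ := by
    rw [F.hnor, htau]
    rw [show Complex.I * -(Complex.I * deriv S.sf u₀) = -(Complex.I * Complex.I) * deriv S.sf u₀
      by ring, Complex.I_mul_I]
    ring
  obtain ⟨δ, hδ, hω, hσ, hloc⟩ := S.window u₀
  set J := Set.Icc (u₀ - δ) (u₀ + δ) with hJ
  have hu₀J : u₀ ∈ J := ⟨by linarith, by linarith⟩
  -- g(t') = ⟨τ(pa,t'), ν(pa,t)⟩ has positive derivative at t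
  have hg : HasDerivAt (fun t' => rinner (F.tang F.pa t') (F.nor F.pa t))
      (‖pderiv F.c F.pa t‖⁻¹ * deriv (fun q => F.curv q t) F.pa) t := by
    have h := (F.hasDerivAt_tang_t F.pa htmem).rinner' (hasDerivAt_const t (F.nor F.pa t))
    convert h using 1
    rw [rinner_smul_left, F.rinner_nor_nor, mul_one]
    simp [rinner]
  have hgpos : 0 < ‖pderiv F.c F.pa t‖⁻¹ * deriv (fun q => F.curv q t) F.pa :=
    mul_pos (inv_pos.2 (F.norm_pderiv_pos F.pa t)) hcon
  have hg0 : rinner (F.tang F.pa t) (F.nor F.pa t) = 0 := F.rinner_tang_nor F.pa t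
  -- ρ(t') = ⟨c(pa,t'), ν(pa,t)⟩ has negative derivative at t
  have hρ : HasDerivAt (fun t' => rinner (F.c F.pa t') (F.nor F.pa t))
      (F.curv F.pa t - F.curvAvg t) t := by
    have h := (F.hflow F.pa t htmem).rinner' (hasDerivAt_const t (F.nor F.pa t))
    convert h using 1
    rw [rinner_smul_left, F.rinner_nor_nor, mul_one]
    simp [rinner]
  have hρneg : F.curv F.pa t - F.curvAvg t < 0 := by linarith
  -- eventual facts to the right of t
  have E1 : ∀ᶠ t' in nhdsWithin t (Set.Ioi t),
      0 < rinner (F.tang F.pa t') (F.nor F.pa t) := by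
    have := ev_gt_right hg hgpos
    filter_upwards [this] with t' h'
    rw [hg0] at h'; exact h'
  have E2 : ∀ᶠ t' in nhdsWithin t (Set.Ioi t),
      rinner (F.c F.pa t') (F.nor F.pa t) < rinner (F.c F.pa t) (F.nor F.pa t) :=
    ev_lt_right hρ hρneg
  have E3 : ∀ᶠ t' in nhdsWithin t (Set.Ioi t),
      (F.c F.pa t' ∈ Set.range S.sf → ∃ v ∈ J, S.sf v = F.c F.pa t') := by
    have hct : ContinuousAt (fun t' => F.c F.pa t') t := (F.continuous_c_t F.pa).continuousAt
    have := hct.eventually (by rw [hu₀] at hloc; exact hloc)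
    exact eventually_nhdsWithin_of_eventually_nhds this
  have E4 : ∀ᶠ t' in nhdsWithin t (Set.Ioi t), t' ∈ Set.Ico 0 F.T := by
    have h1 : Set.Iio F.T ∈ nhdsWithin t (Set.Ioi t) :=
      nhdsWithin_le_nhds (isOpen_Iio.mem_nhds htT)
    filter_upwards [h1, self_mem_nhdsWithin] with t' h' hmem
    exact ⟨le_of_lt (lt_trans ht0 hmem), h'⟩
  -- pick a time t'
  obtain ⟨t', h1, h2, h3, h4⟩ := (E1.and (E2.and (E3.and E4))).exists
  obtain ⟨v, hvJ, hvsf⟩ := h3 (hbc.1 t' h4).1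
  have htau' : F.tang F.pa t' = -(Complex.I * deriv S.sf v) := hbc.2.1 t' h4 v hvsf
  -- translate: g(t') = ω(v)
  have hgω : rinner (F.tang F.pa t') (F.nor F.pa t)
      = rinner (deriv S.sf v) (Complex.I * deriv S.sf u₀) := by
    rw [htau', hnu, rinner_neg_I_left]
  have hω0 : rinner (deriv S.sf u₀) (Complex.I * deriv S.sf u₀) = 0 := rinner_I_self _
  -- hence v > u₀
  have hvgt : u₀ < v := by
    by_contra hle
    push_neg at hle
    have := hω hvJ hu₀J hle
    beta_reduce at this
    rw [hω0] at this
    rw [hgω] at h1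
    linarith
  -- hence σ v > σ u₀, i.e. ρ(t') > ρ(t)
  have hσlt := hσ hu₀J hvJ hvgt
  beta_reduce at hσlt
  have hρt' : rinner (S.sf v) (deriv S.sf u₀) = rinner (F.c F.pa t') (F.nor F.pa t) := by
    rw [hvsf, hnu]
  have hρt : rinner (S.sf u₀) (deriv S.sf u₀) = rinner (F.c F.pa t) (F.nor F.pa t) := by
    rw [hu₀, hnu]
  rw [hρt', hρt] at hσlt
  linarith [h2]

/-- Boundary condition at the right endpoint: at a time where `κ(pb,t) < κ̄(t)`,
the spatial derivative of the curvature at `pb` is nonnegative. -/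
lemma APCSF.boundary_b (F : APCSF) (S : SupportCurve) (hbc : F.NeumannBC S) {t : ℝ}
    (ht0 : 0 < t) (htT : t < F.T) (hlt : F.curv F.pb t < F.curvAvg t) :
    0 ≤ deriv (fun q => F.curv q t) F.pb := by
  by_contra hcon
  push_neg at hcon
  have htmem : t ∈ Set.Ico 0 F.T := ⟨ht0.le, htT⟩
  obtain ⟨u₀, hu₀⟩ := (hbc.1 t htmem).2
  have htau : F.tang F.pb t = Complex.I * deriv S.sf u₀ := hbc.2.2 t htmem u₀ hu₀
  have hnu : F.nor F.pb t = -deriv S.sf u₀ := by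
    rw [F.hnor, htau, ← mul_assoc, Complex.I_mul_I]
    ring
  obtain ⟨δ, hδ, hω, hσ, hloc⟩ := S.window u₀
  set J := Set.Icc (u₀ - δ) (u₀ + δ) with hJ
  have hu₀J : u₀ ∈ J := ⟨by linarith, by linarith⟩
  have hg : HasDerivAt (fun t' => rinner (F.tang F.pb t') (F.nor F.pb t))
      (‖pderiv F.c F.pb t‖⁻¹ * deriv (fun q => F.curv q t) F.pb) t := by
    have h := (F.hasDerivAt_tang_t F.pb htmem).rinner' (hasDerivAt_const t (F.nor F.pb t))
    convert h using 1
    rw [rinner_smul_left, F.rinner_nor_nor, mul_one]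
    simp [rinner]
  have hgneg : ‖pderiv F.c F.pb t‖⁻¹ * deriv (fun q => F.curv q t) F.pb < 0 :=
    mul_neg_of_pos_of_neg (inv_pos.2 (F.norm_pderiv_pos F.pb t)) hcon
  have hg0 : rinner (F.tang F.pb t) (F.nor F.pb t) = 0 := F.rinner_tang_nor F.pb t
  -- ρ(t') = ⟨c(pb,t'), sf'(u₀)⟩ has positive derivative at t
  have hρ : HasDerivAt (fun t' => rinner (F.c F.pb t') (deriv S.sf u₀))
      (F.curvAvg t - F.curv F.pb t) t := by
    have h := (F.hflow F.pb t htmem).rinner' (hasDerivAt_const t (deriv S.sf u₀))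
    convert h using 1
    have : rinner (F.nor F.pb t) (deriv S.sf u₀) = -1 := by
      rw [hnu]
      have := rinner_self (deriv S.sf u₀)
      rw [S.harclength] at this
      simp only [rinner] at this ⊢
      simp only [Complex.neg_re, Complex.neg_im]
      nlinarith [this]
    rw [rinner_smul_left, this]
    simp [rinner]
  have hρpos : 0 < F.curvAvg t - F.curv F.pb t := by linarith
  have E1 : ∀ᶠ t' in nhdsWithin t (Set.Ioi t),
      rinner (F.tang F.pb t') (F.nor F.pb t) < 0 := by
    have := ev_lt_right hg hgneg
    filter_upwards [this] with t' h'
    rw [hg0] at h'; exact h'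
  have E2 : ∀ᶠ t' in nhdsWithin t (Set.Ioi t),
      rinner (F.c F.pb t) (deriv S.sf u₀) < rinner (F.c F.pb t') (deriv S.sf u₀) :=
    ev_gt_right hρ hρpos
  have E3 : ∀ᶠ t' in nhdsWithin t (Set.Ioi t),
      (F.c F.pb t' ∈ Set.range S.sf → ∃ v ∈ J, S.sf v = F.c F.pb t') := by
    have hct : ContinuousAt (fun t' => F.c F.pb t') t := (F.continuous_c_t F.pb).continuousAt
    have := hct.eventually (by rw [hu₀] at hloc; exact hloc)
    exact eventually_nhdsWithin_of_eventually_nhds this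
  have E4 : ∀ᶠ t' in nhdsWithin t (Set.Ioi t), t' ∈ Set.Ico 0 F.T := by
    have h1 : Set.Iio F.T ∈ nhdsWithin t (Set.Ioi t) :=
      nhdsWithin_le_nhds (isOpen_Iio.mem_nhds htT)
    filter_upwards [h1, self_mem_nhdsWithin] with t' h' hmem
    exact ⟨le_of_lt (lt_trans ht0 hmem), h'⟩
  obtain ⟨t', h1, h2, h3, h4⟩ := (E1.and (E2.and (E3.and E4))).exists
  obtain ⟨v, hvJ, hvsf⟩ := h3 (hbc.1 t' h4).2
  have htau' : F.tang F.pb t' = Complex.I * deriv S.sf v := hbc.2.2 t' h4 v hvsf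
  -- translate: g(t') = ω(v)
  have hgω : rinner (F.tang F.pb t') (F.nor F.pb t)
      = rinner (deriv S.sf v) (Complex.I * deriv S.sf u₀) := by
    rw [htau', hnu]
    rw [show rinner (Complex.I * deriv S.sf v) (-deriv S.sf u₀)
        = -rinner (Complex.I * deriv S.sf v) (deriv S.sf u₀) by simp [rinner]; ring]
    rw [rinner_I_left]
    ring
  have hω0 : rinner (deriv S.sf u₀) (Complex.I * deriv S.sf u₀) = 0 := rinner_I_self _
  -- hence v < u₀
  have hvlt : v < u₀ := by
    by_contra hle
    push_neg at hle
    have := hω hu₀J hvJ hle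
    beta_reduce at this
    rw [hω0] at this
    rw [hgω] at h1
    linarith
  have hσlt := hσ hvJ hu₀J hvlt
  beta_reduce at hσlt
  have hρt' : rinner (S.sf v) (deriv S.sf u₀) = rinner (F.c F.pb t') (deriv S.sf u₀) := by
    rw [hvsf]
  have hρt : rinner (S.sf u₀) (deriv S.sf u₀) = rinner (F.c F.pb t) (deriv S.sf u₀) := by
    rw [hu₀]
  rw [hρt', hρt] at hσlt
  linarith [h2]

end BoundaryLemmas
section Endgame

open Complex Set Filter

set_option maxHeartbeats 1600000 in
lemma APCSF.curv_nonneg (F : APCSF) (S : SupportCurve) (hbc : F.NeumannBC S)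
    (hκ0 : ∀ p ∈ Set.Icc F.pa F.pb, 0 ≤ F.curv p 0) :
    ∀ p ∈ Set.Icc F.pa F.pb, ∀ t ∈ Set.Ico (0:ℝ) F.T, 0 ≤ F.curv p t := by
  intro p₁ hp₁ t₁ ht₁
  by_contra hneg
  push_neg at hneg
  rcases eq_or_lt_of_le ht₁.1 with ht₁0 | ht₁pos
  · exact absurd (hκ0 p₁ hp₁) (by rw [ht₁0]; linarith)
  -- compact region and curvature bound
  have hKcont : Continuous (Function.uncurry F.curv) := F.contDiff_curv.continuous
  set Q : Set (ℝ × ℝ) := Set.Icc F.pa F.pb ×ˢ Set.Icc (0:ℝ) t₁ with hQ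
  have hQc : IsCompact Q := isCompact_Icc.prod isCompact_Icc
  obtain ⟨M₀, hM₀⟩ := hQc.exists_bound_of_continuousOn hKcont.continuousOn
  set M := max M₀ 0 with hM
  have hMb : ∀ p ∈ Set.Icc F.pa F.pb, ∀ s ∈ Set.Icc (0:ℝ) t₁, |F.curv p s| ≤ M := by
    intro p hp s hs
    have := hM₀ (p, s) ⟨hp, hs⟩
    rw [Function.uncurry] at this
    calc |F.curv p s| = ‖F.curv p s‖ := (Real.norm_eq_abs _).symm
      _ ≤ M₀ := this
      _ ≤ M := le_max_left _ _
  have hM0 : 0 ≤ M := le_max_right _ _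
  set C := M + 2 with hC
  have hCpos : 0 < C := by linarith
  -- choice of ε
  set ε := min (Real.exp (-(C * t₁))) ((-F.curv p₁ t₁ / 2) * Real.exp (-(C * t₁))) with hε
  have hεpos : 0 < ε := by
    apply lt_min (Real.exp_pos _)
    apply mul_pos (by linarith) (Real.exp_pos _)
  have hε1 : ε * Real.exp (C * t₁) ≤ 1 := by
    calc ε * Real.exp (C * t₁) ≤ Real.exp (-(C * t₁)) * Real.exp (C * t₁) :=
          mul_le_mul_of_nonneg_right (min_le_left _ _) (Real.exp_pos _).le
      _ = 1 := by rw [← Real.exp_add]; simp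
  have hε2 : F.curv p₁ t₁ + ε * Real.exp (C * t₁) < 0 := by
    have h1 : ε * Real.exp (C * t₁)
        ≤ (-F.curv p₁ t₁ / 2) * Real.exp (-(C * t₁)) * Real.exp (C * t₁) :=
      mul_le_mul_of_nonneg_right (min_le_right _ _) (Real.exp_pos _).le
    have h2 : (-F.curv p₁ t₁ / 2) * Real.exp (-(C * t₁)) * Real.exp (C * t₁)
        = -F.curv p₁ t₁ / 2 := by
      rw [mul_assoc, ← Real.exp_add]; simp
    rw [h2] at h1
    linarith
  -- the touching set
  set H : ℝ × ℝ → ℝ := fun z => F.curv z.1 z.2 + ε * Real.exp (C * z.2) with hH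
  have hHcont : Continuous H := by
    apply hKcont.add
    exact continuous_const.mul (Real.continuous_exp.comp (continuous_const.mul continuous_snd))
  set A : Set (ℝ × ℝ) := Q ∩ H ⁻¹' (Set.Iic 0) with hA
  have hAc : IsCompact A := hQc.inter_right (isClosed_Iic.preimage hHcont)
  have hAne : A.Nonempty := by
    refine ⟨(p₁, t₁), ⟨hp₁, ⟨ht₁.1, le_refl _⟩⟩, ?_⟩
    simp only [Set.mem_preimage, Set.mem_Iic, hH]
    exact hε2.le
  set Sset := Prod.snd '' A with hSset
  have hSc : IsCompact Sset := hAc.image continuous_snd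
  have hSne : Sset.Nonempty := hAne.image _
  set tstar := sInf Sset with htstar
  have htmem : tstar ∈ Sset := hSc.sInf_mem hSne
  obtain ⟨z₀, hz₀A, hz₀⟩ := htmem
  have hz₀Q : z₀ ∈ Q := hz₀A.1
  have htIcc : tstar ∈ Set.Icc (0:ℝ) t₁ := by rw [← hz₀]; exact hz₀Q.2
  have htpos : 0 < tstar := by
    rcases eq_or_lt_of_le htIcc.1 with h0 | h0
    · exfalso
      have hH0 : F.curv z₀.1 z₀.2 + ε * Real.exp (C * z₀.2) ≤ 0 := hz₀A.2
      have hz2 : z₀.2 = 0 := by rw [hz₀, ← h0]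
      rw [hz2] at hH0
      have h1 : 0 ≤ F.curv z₀.1 0 := hκ0 z₀.1 hz₀Q.1
      have h2 : 0 < ε * Real.exp (C * 0) := mul_pos hεpos (Real.exp_pos _)
      linarith
    · exact h0
  have htT : tstar < F.T := lt_of_le_of_lt htIcc.2 ht₁.2
  have htstarIco : tstar ∈ Set.Ico 0 F.T := ⟨htIcc.1, htT⟩
  -- positivity before tstar
  have hbefore : ∀ p ∈ Set.Icc F.pa F.pb, ∀ s, 0 ≤ s → s < tstar → 0 < H (p, s) := by
    intro p hp s hs0 hst
    by_contra hc
    push_neg at hc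
    have hsQ : (p, s) ∈ A := ⟨⟨hp, ⟨hs0, le_trans hst.le htIcc.2⟩⟩, hc⟩
    have : tstar ≤ s := csInf_le hSc.bddBelow ⟨(p, s), hsQ, rfl⟩
    linarith
  -- spatial minimum point at time tstar
  obtain ⟨q₀, hq₀, hq₀min'⟩ := isCompact_Icc.exists_isMinOn (Set.nonempty_Icc.2 F.hab.le)
    ((F.continuous_curv_slice tstar).continuousOn :
      ContinuousOn (fun x => F.curv x tstar) (Set.Icc F.pa F.pb))
  have hq₀min : ∀ x ∈ Set.Icc F.pa F.pb, F.curv q₀ tstar ≤ F.curv x tstar :=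
    fun x hx => hq₀min' hx
  -- value at the minimum is exactly the barrier
  have hz₀H : F.curv z₀.1 tstar + ε * Real.exp (C * tstar) ≤ 0 := by
    have h : F.curv z₀.1 z₀.2 + ε * Real.exp (C * z₀.2) ≤ 0 := hz₀A.2
    rwa [hz₀] at h
  have hq₀le : F.curv q₀ tstar + ε * Real.exp (C * tstar) ≤ 0 := by
    have := hq₀min z₀.1 hz₀Q.1
    linarith
  have hq₀ge : 0 ≤ F.curv q₀ tstar + ε * Real.exp (C * tstar) := by
    have hgcont : Continuous (fun s => F.curv q₀ s + ε * Real.exp (C * s)) := by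
      apply (contDiff_slice_t F.contDiff_curv q₀).continuous.add
      exact continuous_const.mul (Real.continuous_exp.comp (continuous_const.mul continuous_id))
    have htend : Tendsto (fun s => F.curv q₀ s + ε * Real.exp (C * s))
        (nhdsWithin tstar (Set.Iio tstar))
        (nhds (F.curv q₀ tstar + ε * Real.exp (C * tstar))) :=
      hgcont.continuousAt.mono_left nhdsWithin_le_nhds
    apply ge_of_tendsto htend
    have hIoo : Set.Ioo (0:ℝ) tstar ∈ nhdsWithin tstar (Set.Iio tstar) := by
      rw [mem_nhdsWithin]
      exact ⟨Set.Ioi 0, isOpen_Ioi, htpos, fun y hy => ⟨hy.1, hy.2⟩⟩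
    filter_upwards [hIoo] with s hs
    exact (hbefore q₀ hq₀ s hs.1.le hs.2).le
  have hq₀val : F.curv q₀ tstar = -(ε * Real.exp (C * tstar)) := by linarith
  -- choose a working minimum point q with zero spatial derivative
  have hmain : ∃ q ∈ Set.Icc F.pa F.pb,
      (∀ x ∈ Set.Icc F.pa F.pb, F.curv q tstar ≤ F.curv x tstar) ∧
      F.curv q tstar = -(ε * Real.exp (C * tstar)) ∧
      deriv (fun x => F.curv x tstar) q = 0 := by
    by_cases hint : ∃ q ∈ Set.Ioo F.pa F.pb, F.curv q tstar = F.curv q₀ tstar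
    · obtain ⟨q, hqIoo, hqval⟩ := hint
      have hqIcc : q ∈ Set.Icc F.pa F.pb := ⟨hqIoo.1.le, hqIoo.2.le⟩
      refine ⟨q, hqIcc, ?_, by rw [hqval]; exact hq₀val, ?_⟩
      · intro x hx; rw [hqval]; exact hq₀min x hx
      · apply IsLocalMin.deriv_eq_zero
        rw [IsLocalMin, IsMinFilter]
        filter_upwards [Icc_mem_nhds hqIoo.1 hqIoo.2] with x hx
        rw [hqval]
        exact hq₀min x hx
    · push_neg at hint
      have hq₀end : q₀ = F.pa ∨ q₀ = F.pb := by
        by_contra hend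
        push_neg at hend
        exact (hint q₀ ⟨lt_of_le_of_ne hq₀.1 (Ne.symm hend.1), lt_of_le_of_ne hq₀.2 hend.2⟩) rfl
      have hstrict : ∀ x ∈ Set.Ioo F.pa F.pb, F.curv q₀ tstar < F.curv x tstar := by
        intro x hx
        rcases lt_or_eq_of_le (hq₀min x ⟨hx.1.le, hx.2.le⟩) with h | h
        · exact h
        · exact absurd h.symm (hint x hx)
      have havg : F.curv q₀ tstar < F.curvAvg tstar := F.min_lt_avg hq₀ hstrict
      have hdq : deriv (fun x => F.curv x tstar) q₀ = 0 := by
        rcases hq₀end with hpa | hpb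
        · have h1 : deriv (fun x => F.curv x tstar) F.pa ≤ 0 := by
            apply F.boundary_a S hbc htpos htT
            rw [← hpa]; exact havg
          have h2 : 0 ≤ deriv (fun x => F.curv x tstar) F.pa := by
            apply min_deriv_nonneg_left F.hab (F.hasDerivAt_curv_p F.pa tstar)
            intro x hx
            rw [← hpa]
            exact hq₀min x hx
          rw [hpa]; linarith
        · have h1 : 0 ≤ deriv (fun x => F.curv x tstar) F.pb := by
            apply F.boundary_b S hbc htpos htT
            rw [← hpb]; exact havg
          have h2 : deriv (fun x => F.curv x tstar) F.pb ≤ 0 := by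
            apply min_deriv_nonpos_right F.hab (F.hasDerivAt_curv_p F.pb tstar)
            intro x hx
            rw [← hpb]
            exact hq₀min x hx
          rw [hpb]; linarith
      exact ⟨q₀, hq₀, hq₀min, hq₀val, hdq⟩
  obtain ⟨q, hqIcc, hqmin, hqval, hdq⟩ := hmain
  -- time derivative at the touching point
  set r := ‖pderiv F.c q tstar‖ with hr
  have hrpos : 0 < r := F.norm_pderiv_pos q tstar
  set W := deriv (fun x => ‖pderiv F.c x tstar‖⁻¹ * deriv (fun y => F.curv y tstar) x) q with hW
  have hpde := F.pde q htstarIco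
  have hexp : HasDerivAt (fun s => ε * Real.exp (C * s)) (ε * (C * Real.exp (C * tstar))) tstar := by
    have h1 : HasDerivAt (fun s => C * s) C tstar := by
      simpa using (hasDerivAt_id tstar).const_mul C
    have h2 := (Real.hasDerivAt_exp (C * tstar)).comp tstar h1
    have h3 := h2.const_mul ε
    refine h3.congr_deriv ?_; symm
    ring
  have hGd := hpde.fun_add hexp
  have htouch : (r⁻¹ * W + F.curv q tstar ^ 2 * (F.curv q tstar - F.curvAvg tstar))
      + ε * (C * Real.exp (C * tstar)) ≤ 0 := by
    apply touch_deriv_nonpos htpos hGd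
    · intro s hs0 hst
      exact hbefore q hqIcc s hs0 hst
    · rw [hqval]; ring
  -- bound the reaction term
  set Ex := Real.exp (C * tstar) with hEx
  have hExpos : 0 < Ex := Real.exp_pos _
  have hεE1 : ε * Ex ≤ 1 := by
    have h1 : Ex ≤ Real.exp (C * t₁) := by
      apply Real.exp_le_exp.2
      exact mul_le_mul_of_nonneg_left htIcc.2 hCpos.le
    calc ε * Ex ≤ ε * Real.exp (C * t₁) := mul_le_mul_of_nonneg_left h1 hεpos.le
      _ ≤ 1 := hε1
  have havgb : |F.curvAvg tstar| ≤ M :=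
    F.avg_bound (fun p hp => hMb p hp tstar htIcc)
  have hx : 0 ≤ ε * Ex := (mul_pos hεpos hExpos).le
  have hMavg : F.curvAvg tstar ≤ M := (abs_le.1 havgb).2
  have hreac : -(ε * Ex) * (1 + M) ≤ F.curv q tstar ^ 2 * (F.curv q tstar - F.curvAvg tstar) := by
    rw [hqval]
    have f1 : (ε * Ex) * (ε * Ex) ≤ ε * Ex := by
      have := mul_le_mul_of_nonneg_right hεE1 hx
      linarith
    have f2 : (ε * Ex) * (ε * Ex) * (ε * Ex) ≤ ε * Ex := by
      have := mul_le_mul_of_nonneg_right f1 hx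
      have h2 : 0 ≤ (ε * Ex) * (ε * Ex) := mul_nonneg hx hx
      nlinarith
    have f3 : (ε * Ex) * (ε * Ex) * F.curvAvg tstar ≤ (ε * Ex) * M := by
      have h1 : (ε * Ex) * (ε * Ex) * F.curvAvg tstar ≤ (ε * Ex) * (ε * Ex) * M :=
        mul_le_mul_of_nonneg_left hMavg (mul_nonneg hx hx)
      have h2 : (ε * Ex) * (ε * Ex) * M ≤ (ε * Ex) * M := mul_le_mul_of_nonneg_right f1 hM0
      linarith
    have hexpand : (-(ε * Ex)) ^ 2 * (-(ε * Ex) - F.curvAvg tstar)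
        = -((ε * Ex) * (ε * Ex) * (ε * Ex)) - (ε * Ex) * (ε * Ex) * F.curvAvg tstar := by
      ring
    rw [hexpand]
    linarith [f2, f3]
  have hWneg : W < 0 := by
    have hCe : ε * (C * Ex) = ε * Ex * M + 2 * (ε * Ex) := by rw [hC]; ring
    have hre : -(ε * Ex) * (1 + M) = -(ε * Ex * M) - ε * Ex := by ring
    have h1 : r⁻¹ * W ≤ -(ε * Ex) := by linarith
    have h2 : r⁻¹ * W < 0 := by
      have := mul_pos hεpos hExpos
      linarith
    have h3 : W = r * (r⁻¹ * W) := by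
      field_simp
    rw [h3]
    exact mul_neg_of_pos_of_neg hrpos h2
  -- expand W using the vanishing first derivative
  have hRd : HasDerivAt (fun x => ‖pderiv F.c x tstar‖⁻¹)
      (deriv (fun x => ‖pderiv F.c x tstar‖⁻¹) q) q := by
    have hc : ContDiff ℝ ((⊤:ℕ∞) : WithTop ℕ∞) (fun x => ‖pderiv F.c x tstar‖⁻¹) := by
      have := F.contDiff_normE.comp ((contDiff_id.prodMk contDiff_const :
        ContDiff ℝ ((⊤:ℕ∞) : WithTop ℕ∞) (fun x : ℝ => (x, tstar))))
      exact this.inv (fun x => (F.norm_pderiv_pos x tstar).ne')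
    exact ((hc.differentiable (by simp)) q).hasDerivAt
  have hdkd : HasDerivAt (fun x => deriv (fun y => F.curv y tstar) x)
      (deriv (deriv (fun y => F.curv y tstar)) q) q := by
    have hc : ContDiff ℝ ((⊤:ℕ∞) : WithTop ℕ∞) (fun x => deriv (fun y => F.curv y tstar) x) :=
      (contDiff_uncurry_pderiv' F.contDiff_curv).comp ((contDiff_id.prodMk contDiff_const :
        ContDiff ℝ ((⊤:ℕ∞) : WithTop ℕ∞) (fun x : ℝ => (x, tstar))))
    exact ((hc.differentiable (by simp)) q).hasDerivAt
  have hWval : W = ‖pderiv F.c q tstar‖⁻¹ * deriv (deriv (fun y => F.curv y tstar)) q := by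
    rw [hW]
    rw [(hRd.fun_mul hdkd).deriv]
    rw [hdq]
    ring
  have hsecond : deriv (deriv (fun y => F.curv y tstar)) q < 0 := by
    have h4 : deriv (deriv (fun y => F.curv y tstar)) q = r * W := by
      rw [hWval, hr, ← mul_assoc, mul_inv_cancel₀ (F.norm_pderiv_pos q tstar).ne', one_mul]
    rw [h4]
    exact mul_neg_of_pos_of_neg hrpos hWneg
  -- contradiction with the minimality of q
  exact no_min_of_neg_second_deriv (contDiff_slice_p F.contDiff_curv tstar)
    F.hab hqIcc hqmin hdq hsecond

end Endgame

/-- Convexity is preserved: if the initial curve satisfies `κ₀ ≥ 0` on `[a,b]`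
then `κ ≥ 0` on `[a,b] × [0,T)`. -/
theorem convexity_preserved (F : APCSF) (S : SupportCurve) (hbc : F.NeumannBC S)
    (hκ0 : ∀ p ∈ Set.Icc F.pa F.pb, 0 ≤ F.curv p 0) :
    ∀ p ∈ Set.Icc F.pa F.pb, ∀ t ∈ Set.Ico (0:ℝ) F.T, 0 ≤ F.curv p t :=
  F.curv_nonneg S hbc hκ0
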